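/- For p, q, k > 1 and r, s ∈ (0,1) with r ≥ s, one has (arcsin_{p,q}(s)/arcsin_{p,q}(r))^k ≤ arcsin_{p,q}(s^k)/arcsin_{p,q}(r^k). -/

import Mathlib

/-!
Write `F = arcsin_{p,q}` and `f = F'`. The inequality says that `log F(x^k) - k log F(x)` is
antitone on `(0,1)`. Its derivative is `(k/x)(ψ(x^k) - ψ(x))` with `ψ(x) = x f(x) / F(x)`, and
`x^k ≤ x`, so it suffices that `ψ` is monotone (i.e. `u ↦ log F(eᵘ)` is convex). Since
`F(x) = x ∫₀¹ f(xu) du`, this reduces to the pointwise bound `f(y) f(xu) ≤ f(x) f(yu)` for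
`0 ≤ y ≤ x < 1`, `0 ≤ u ≤ 1`, which holds because `t ↦ t^(-1/p)` is antitone and
`(1 - y^q)(1 - x^q u^q) - (1 - x^q)(1 - y^q u^q) = (x^q - y^q)(1 - u^q) ≥ 0`.
-/

open Real Set

noncomputable def arcsinpq (p q x : ℝ) : ℝ :=
  ∫ t in (0:ℝ)..x, (1 - t ^ q) ^ (-1/p)

open intervalIntegral MeasureTheory

section LogConvexity

variable {F f : ℝ → ℝ} {k : ℝ}

lemma rpow_mem_Ioo_zero_one (hk : 0 < k) {x : ℝ} (hx : x ∈ Ioo (0:ℝ) 1) :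
    x ^ k ∈ Ioo (0:ℝ) 1 :=
  ⟨rpow_pos_of_pos hx.1 k, rpow_lt_one hx.1.le hx.2 hk⟩

lemma hasDerivAt_log_comp_rpow_sub_mul_log (hF : ∀ x ∈ Ioo (0:ℝ) 1, HasDerivAt F (f x) x)
    (hFpos : ∀ x ∈ Ioo (0:ℝ) 1, 0 < F x) (hk : 0 < k) {x : ℝ} (hx : x ∈ Ioo (0:ℝ) 1) :
    HasDerivAt (fun y => log (F (y ^ k)) - k * log (F y))
      (k / x * (x ^ k * f (x ^ k) / F (x ^ k) - x * f x / F x)) x := by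
  have hxk := rpow_mem_Ioo_zero_one hk hx
  have hpow := (hF _ hxk).comp x (hasDerivAt_rpow_const (p := k) (Or.inl hx.1.ne'))
  refine ((hpow.log (hFpos _ hxk).ne').sub
    (((hF x hx).log (hFpos x hx).ne').const_mul k)).congr_deriv ?_
  rw [rpow_sub_one hx.1.ne', Function.comp_apply]
  field_simp [(hFpos _ hxk).ne', (hFpos x hx).ne', hx.1.ne']

lemma antitoneOn_log_comp_rpow_sub_mul_log (hF : ∀ x ∈ Ioo (0:ℝ) 1, HasDerivAt F (f x) x)
    (hFpos : ∀ x ∈ Ioo (0:ℝ) 1, 0 < F x)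
    (hmono : MonotoneOn (fun x => x * f x / F x) (Ioo 0 1)) (hk : 1 ≤ k) :
    AntitoneOn (fun y => log (F (y ^ k)) - k * log (F y)) (Ioo 0 1) := by
  have hk0 : 0 < k := by linarith
  have hderiv := fun x hx => hasDerivAt_log_comp_rpow_sub_mul_log hF hFpos hk0 (x := x) hx
  refine antitoneOn_of_hasDerivWithinAt_nonpos (convex_Ioo 0 1)
    (fun x hx => (hderiv x hx).continuousAt.continuousWithinAt)
    (fun x hx => (hderiv x (interior_subset hx)).hasDerivWithinAt) fun x hx => ?_
  rw [interior_Ioo] at hx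
  have hxk_le : x ^ k ≤ x := by
    simpa using rpow_le_rpow_of_exponent_ge hx.1 hx.2.le hk
  exact mul_nonpos_of_nonneg_of_nonpos (div_nonneg hk0.le hx.1.le)
    (sub_nonpos.mpr (hmono (rpow_mem_Ioo_zero_one hk0 hx) hx hxk_le))

theorem div_rpow_le_div_apply_rpow (hF : ∀ x ∈ Ioo (0:ℝ) 1, HasDerivAt F (f x) x)
    (hFpos : ∀ x ∈ Ioo (0:ℝ) 1, 0 < F x)
    (hmono : MonotoneOn (fun x => x * f x / F x) (Ioo 0 1))
    (hk : 1 ≤ k) {r s : ℝ} (hr : r ∈ Ioo (0:ℝ) 1) (hs : s ∈ Ioo (0:ℝ) 1) (hsr : s ≤ r) :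
    (F s / F r) ^ k ≤ F (s ^ k) / F (r ^ k) := by
  have hk0 : 0 < k := by linarith
  have hlog := antitoneOn_log_comp_rpow_sub_mul_log hF hFpos hmono hk hs hr hsr
  have hFs := hFpos s hs
  have hFr := hFpos r hr
  have hFsk := hFpos _ (rpow_mem_Ioo_zero_one hk0 hs)
  have hFrk := hFpos _ (rpow_mem_Ioo_zero_one hk0 hr)
  rw [← log_le_log_iff (by positivity) (div_pos hFsk hFrk), log_rpow (div_pos hFs hFr),
    log_div hFs.ne' hFr.ne', log_div hFsk.ne' hFrk.ne']
  simp only at hlog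
  linarith

end LogConvexity

section ArcsinPQ

noncomputable def arcsinpqIntegrand (p q t : ℝ) : ℝ := (1 - t ^ q) ^ (-1/p)

variable {p q : ℝ}

lemma one_sub_rpow_pos (hq : 0 < q) {t : ℝ} (ht : t ∈ Ico (0:ℝ) 1) : 0 < 1 - t ^ q :=
  sub_pos.mpr (rpow_lt_one ht.1 ht.2 hq)

lemma arcsinpqIntegrand_pos (hq : 0 < q) {t : ℝ} (ht : t ∈ Ico (0:ℝ) 1) :
    0 < arcsinpqIntegrand p q t :=
  rpow_pos_of_pos (one_sub_rpow_pos hq ht) _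

lemma continuousAt_arcsinpqIntegrand (hq : 0 < q) {t : ℝ} (ht : t ∈ Ico (0:ℝ) 1) :
    ContinuousAt (arcsinpqIntegrand p q) t :=
  (continuousAt_const.sub (continuousAt_rpow_const t q (Or.inr hq.le))).rpow_const
    (Or.inl (one_sub_rpow_pos hq ht).ne')

lemma intervalIntegrable_arcsinpqIntegrand (hq : 0 < q) {x : ℝ} (hx : x ∈ Ico (0:ℝ) 1) :
    IntervalIntegrable (arcsinpqIntegrand p q) volume 0 x := by
  refine ContinuousOn.intervalIntegrable fun t ht => ?_
  rw [uIcc_of_le hx.1] at ht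
  exact (continuousAt_arcsinpqIntegrand hq ⟨ht.1, ht.2.trans_lt hx.2⟩).continuousWithinAt

lemma arcsinpq_pos (hq : 0 < q) {x : ℝ} (hx : x ∈ Ioo (0:ℝ) 1) : 0 < arcsinpq p q x :=
  intervalIntegral_pos_of_pos_on (intervalIntegrable_arcsinpqIntegrand hq (Ioo_subset_Ico_self hx))
    (fun _ ht => arcsinpqIntegrand_pos hq ⟨ht.1.le, ht.2.trans hx.2⟩) hx.1

lemma hasDerivAt_arcsinpq (hq : 0 < q) {x : ℝ} (hx : x ∈ Ioo (0:ℝ) 1) :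
    HasDerivAt (arcsinpq p q) (arcsinpqIntegrand p q x) x := by
  have hmeas : Measurable (arcsinpqIntegrand p q) := by unfold arcsinpqIntegrand; fun_prop
  exact integral_hasDerivAt_right
    (intervalIntegrable_arcsinpqIntegrand hq (Ioo_subset_Ico_self hx))
    hmeas.aestronglyMeasurable.stronglyMeasurableAtFilter
    (continuousAt_arcsinpqIntegrand hq (Ioo_subset_Ico_self hx))

lemma arcsinpq_eq_mul_integral (p q x : ℝ) :
    arcsinpq p q x = x * ∫ u in (0:ℝ)..1, arcsinpqIntegrand p q (x * u) := by
  have h := smul_integral_comp_mul_left (a := 0) (b := 1) (arcsinpqIntegrand p q) x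
  simp only [mul_zero, mul_one, smul_eq_mul] at h
  exact h.symm

lemma intervalIntegrable_arcsinpqIntegrand_comp_mul (hq : 0 < q) {x : ℝ}
    (hx : x ∈ Ico (0:ℝ) 1) :
    IntervalIntegrable (fun u => arcsinpqIntegrand p q (x * u)) volume 0 1 := by
  refine ContinuousOn.intervalIntegrable fun u hu => ?_
  rw [uIcc_of_le zero_le_one] at hu
  have hxu : x * u ∈ Ico (0:ℝ) 1 :=
    ⟨mul_nonneg hx.1 hu.1, (mul_le_of_le_one_right hx.1 hu.2).trans_lt hx.2⟩
  exact ((continuousAt_arcsinpqIntegrand hq hxu).comp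
    (continuous_const_mul x).continuousAt).continuousWithinAt

lemma arcsinpqIntegrand_mul_le (hp : 0 ≤ p) (hq : 0 < q) {u x y : ℝ} (hu : u ∈ Icc (0:ℝ) 1)
    (hy : 0 ≤ y) (hyx : y ≤ x) (hx : x < 1) :
    arcsinpqIntegrand p q y * arcsinpqIntegrand p q (x * u)
      ≤ arcsinpqIntegrand p q x * arcsinpqIntegrand p q (y * u) := by
  have hx0 := hy.trans hyx
  have hxq := one_sub_rpow_pos hq (t := x) ⟨hx0, hx⟩
  have hyq := one_sub_rpow_pos hq (t := y) ⟨hy, hyx.trans_lt hx⟩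
  have hxuq := one_sub_rpow_pos hq (t := x * u)
    ⟨mul_nonneg hx0 hu.1, (mul_le_of_le_one_right hx0 hu.2).trans_lt hx⟩
  have hyuq := one_sub_rpow_pos hq (t := y * u)
    ⟨mul_nonneg hy hu.1, (mul_le_of_le_one_right hy hu.2).trans_lt (hyx.trans_lt hx)⟩
  simp only [arcsinpqIntegrand]
  rw [← mul_rpow hyq.le hxuq.le, ← mul_rpow hxq.le hyuq.le]
  refine rpow_le_rpow_of_nonpos (mul_pos hxq hyuq) ?_
    (div_nonpos_of_nonpos_of_nonneg (by norm_num) hp)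
  rw [mul_rpow hx0 hu.1, mul_rpow hy hu.1]
  have hdiff : (1 - y ^ q) * (1 - x ^ q * u ^ q) - (1 - x ^ q) * (1 - y ^ q * u ^ q)
      = (x ^ q - y ^ q) * (1 - u ^ q) := by ring
  have hyx_q : y ^ q ≤ x ^ q := rpow_le_rpow hy hyx hq.le
  have hu_q : u ^ q ≤ 1 := rpow_le_one hu.1 hu.2 hq.le
  linarith [mul_nonneg (sub_nonneg.2 hyx_q) (sub_nonneg.2 hu_q)]

lemma monotoneOn_mul_arcsinpqIntegrand_div_arcsinpq (hp : 0 ≤ p) (hq : 0 < q) :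
    MonotoneOn (fun x => x * arcsinpqIntegrand p q x / arcsinpq p q x) (Ioo 0 1) := by
  intro y hy x hx hyx
  set I : ℝ → ℝ := fun z => ∫ u in (0:ℝ)..1, arcsinpqIntegrand p q (z * u)
  have hI : arcsinpqIntegrand p q y * I x ≤ arcsinpqIntegrand p q x * I y := by
    simp only [I, ← intervalIntegral.integral_const_mul]
    exact integral_mono_on zero_le_one
      ((intervalIntegrable_arcsinpqIntegrand_comp_mul hq (Ioo_subset_Ico_self hx)).const_mul _)
      ((intervalIntegrable_arcsinpqIntegrand_comp_mul hq (Ioo_subset_Ico_self hy)).const_mul _)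
      fun u hu => arcsinpqIntegrand_mul_le hp hq hu hy.1.le hyx hx.2
  simp only
  rw [div_le_div_iff₀ (arcsinpq_pos hq hy) (arcsinpq_pos hq hx), arcsinpq_eq_mul_integral p q x,
    arcsinpq_eq_mul_integral p q y]
  calc y * arcsinpqIntegrand p q y * (x * I x) = x * y * (arcsinpqIntegrand p q y * I x) := by ring
    _ ≤ x * y * (arcsinpqIntegrand p q x * I y) :=
      mul_le_mul_of_nonneg_left hI (mul_pos hx.1 hy.1).le
    _ = x * arcsinpqIntegrand p q x * (y * I y) := by ring

end ArcsinPQ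

theorem stmt13 (p q k r s : ℝ) (hp : 1 < p) (hq : 1 < q) (hk : 1 < k)
    (hr : r ∈ Ioo (0:ℝ) 1) (hs : s ∈ Ioo (0:ℝ) 1) (hrs : s ≤ r) :
    (arcsinpq p q s / arcsinpq p q r) ^ k ≤ arcsinpq p q (s ^ k) / arcsinpq p q (r ^ k) := by
  have hq0 : 0 < q := by linarith
  exact div_rpow_le_div_apply_rpow (fun x hx => hasDerivAt_arcsinpq hq0 hx)
    (fun x hx => arcsinpq_pos hq0 hx)
    (monotoneOn_mul_arcsinpqIntegrand_div_arcsinpq (by linarith) hq0) hk.le hr hs hrs
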